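/- Let 𝕂 be a Krein space with fundamental symmetry J and let {(W_i, v_i) : i ∈ I} be a J-fusion frame for 𝕂 with positive synthesis part T₊ and M₊ = closure of Σ_{i∈I₊} W_i. Then for every f ∈ M₊, Σ_{i∈I₊} v_i² [π_{W_i}(Jf), f] ≤ (1/γ(G_{M₊})) ‖T₊‖² [f,f], where γ denotes the reduced minimum modulus and G_{M₊} the Gramian of M₊. -/

import Mathlib

noncomputable section

open scoped InnerProductSpace ENNReal

attribute [local instance] Classical.propDecidable

namespace JFF

instance : Fact ((1 : ℝ≥0∞) ≤ 2) := ⟨by norm_num⟩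

variable {𝕂 : Type*} [NormedAddCommGroup 𝕂] [InnerProductSpace ℂ 𝕂] [CompleteSpace 𝕂]
variable {ι : Type*}

/-- The indefinite inner product `[x, y]` induced by the fundamental symmetry `J`;
with Mathlib's convention (inner products conjugate-linear in the *first* variable),
the paper's `[x, y] = ⟨Jx, y⟩`, which is linear in `x`, is `⟪J y, x⟫_ℂ`. -/
def ip (J : 𝕂 →L[ℂ] 𝕂) (x y : 𝕂) : ℂ := @inner ℂ _ _ (J y) x

/-- `J` is a fundamental symmetry: a bounded selfadjoint operator with `J ∘ J = 1`. -/
def IsFundSym (J : 𝕂 →L[ℂ] 𝕂) : Prop := IsSelfAdjoint J ∧ J ∘L J = 1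

/-- `W` is a `J`-nonnegative subspace. -/
def JNonneg (J : 𝕂 →L[ℂ] 𝕂) (W : Submodule ℂ 𝕂) : Prop :=
  ∀ f ∈ W, 0 ≤ (ip J f f).re

/-- `W` is a `J`-nonpositive subspace. -/
def JNonpos (J : 𝕂 →L[ℂ] 𝕂) (W : Submodule ℂ 𝕂) : Prop :=
  ∀ f ∈ W, (ip J f f).re ≤ 0

/-- `W` is a `J`-negative subspace. -/
def JNeg (J : 𝕂 →L[ℂ] 𝕂) (W : Submodule ℂ 𝕂) : Prop :=
  ∀ f ∈ W, f ≠ 0 → (ip J f f).re < 0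

/-- `W` is uniformly `J`-positive. -/
def UnifJPos (J : 𝕂 →L[ℂ] 𝕂) (W : Submodule ℂ 𝕂) : Prop :=
  ∃ α : ℝ, 0 < α ∧ ∀ f ∈ W, α * ‖f‖ ^ 2 ≤ (ip J f f).re

/-- `W` is uniformly `J`-negative. -/
def UnifJNeg (J : 𝕂 →L[ℂ] 𝕂) (W : Submodule ℂ 𝕂) : Prop :=
  ∃ α : ℝ, 0 < α ∧ ∀ f ∈ W, (ip J f f).re ≤ -(α * ‖f‖ ^ 2)

/-- `W` is maximal uniformly `J`-positive. -/
def MaxUnifJPos (J : 𝕂 →L[ℂ] 𝕂) (W : Submodule ℂ 𝕂) : Prop :=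
  UnifJPos J W ∧ ∀ W' : Submodule ℂ 𝕂, UnifJPos J W' → W ≤ W' → W' = W

/-- `W` is maximal uniformly `J`-negative. -/
def MaxUnifJNeg (J : 𝕂 →L[ℂ] 𝕂) (W : Submodule ℂ 𝕂) : Prop :=
  UnifJNeg J W ∧ ∀ W' : Submodule ℂ 𝕂, UnifJNeg J W' → W ≤ W' → W' = W

/-- `W` is a maximal `J`-nonnegative subspace. -/
def MaxJNonneg (J : 𝕂 →L[ℂ] 𝕂) (W : Submodule ℂ 𝕂) : Prop :=
  JNonneg J W ∧ ∀ W' : Submodule ℂ 𝕂, JNonneg J W' → W ≤ W' → W' = W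

/-- `W` is a maximal `J`-nonpositive subspace. -/
def MaxJNonpos (J : 𝕂 →L[ℂ] 𝕂) (W : Submodule ℂ 𝕂) : Prop :=
  JNonpos J W ∧ ∀ W' : Submodule ℂ 𝕂, JNonpos J W' → W ≤ W' → W' = W

/-- The `J`-orthogonal companion `M^{[⊥]} = {f | [f, m] = 0 ∀ m ∈ M}`. -/
def JOrth (J : 𝕂 →L[ℂ] 𝕂) (M : Submodule ℂ 𝕂) : Submodule ℂ 𝕂 where
  carrier := {f | ∀ m ∈ M, ip J f m = 0}
  add_mem' := by
    intro a b ha hb m hm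
    simp only [ip, inner_add_right] at *
    rw [ha m hm, hb m hm, add_zero]
  zero_mem' := by
    intro m hm
    simp [ip]
  smul_mem' := by
    intro c a ha m hm
    simp only [ip, inner_smul_right] at *
    rw [ha m hm, mul_zero]

/-- A closed subspace is regular (projectively complete) if `𝕂 = M ⊕ M^{[⊥]}`. -/
def Regular (J : 𝕂 →L[ℂ] 𝕂) (M : Submodule ℂ 𝕂) : Prop :=
  IsClosed (M : Set 𝕂) ∧ IsCompl M (JOrth J M)

/-- The orthogonal projection `π_M` onto `M` as an endomorphism of `𝕂`
(junk value `0` if `M` is not closed). -/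
def pr (M : Submodule ℂ 𝕂) : 𝕂 →L[ℂ] 𝕂 :=
  if h : IsClosed (M : Set 𝕂) then
    letI : CompleteSpace M := h.completeSpace_coe
    M.subtypeL ∘L M.orthogonalProjectionOnto
  else 0

/-- The Gramian operator `G_M = π_M ∘ J|_M : M → M`
(junk value `0` if `M` is not closed). -/
def gram (J : 𝕂 →L[ℂ] 𝕂) (M : Submodule ℂ 𝕂) : M →L[ℂ] M :=
  if h : IsClosed (M : Set 𝕂) then
    letI : CompleteSpace M := h.completeSpace_coe
    M.orthogonalProjectionOnto ∘L (J ∘L M.subtypeL)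
  else 0

/-- The reduced minimum modulus `γ(T) = inf {‖Tx‖ : x ∈ N(T)ᗮ, ‖x‖ = 1}`. -/
def rmm {E F : Type*} [NormedAddCommGroup E] [InnerProductSpace ℂ E]
    [NormedAddCommGroup F] [InnerProductSpace ℂ F] (T : E →L[ℂ] F) : ℝ :=
  sInf ((fun x => ‖T x‖) '' {x | x ∈ (LinearMap.ker (T : E →ₗ[ℂ] F))ᗮ ∧ ‖x‖ = 1})

/-- `M_S`: the closure of `Σ_{i ∈ S} W i`. -/
def Mspace (W : ι → Submodule ℂ 𝕂) (S : Set ι) : Submodule ℂ 𝕂 :=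
  (⨆ i ∈ S, W i).topologicalClosure

/-- The closed span of `{f i : i ∈ S}`. -/
def Mspan (f : ι → 𝕂) (S : Set ι) : Submodule ℂ 𝕂 :=
  (Submodule.span ℂ (f '' S)).topologicalClosure

/-- The subspace of the ℓ²-direct sum consisting of families supported on `S`. -/
def supp (W : ι → Submodule ℂ 𝕂) (S : Set ι) :
    Submodule ℂ (lp (fun i => W i) 2) where
  carrier := {x | ∀ i ∉ S, x i = 0}
  add_mem' := by
    intro a b ha hb i hi
    have h : (a + b : lp (fun i => W i) 2) i = a i + b i := by
      rw [lp.coeFn_add]; rfl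
    rw [h, ha i hi, hb i hi, add_zero]
  zero_mem' := by
    intro i hi
    have h : (0 : lp (fun i => W i) 2) i = 0 := by
      rw [lp.coeFn_zero]; rfl
    rw [h]
  smul_mem' := by
    intro c a ha i hi
    have h : (c • a : lp (fun i => W i) 2) i = c • a i := by
      rw [lp.coeFn_smul]; rfl
    rw [h, ha i hi, smul_zero]

/-- `T` is the synthesis operator of the weighted family of subspaces `(W, v)`:
`T {f_i} = Σ_i v_i f_i` (an unconditionally convergent sum). -/
def IsSynth (W : ι → Submodule ℂ 𝕂) (v : ι → ℝ)
    (T : lp (fun i => W i) 2 →L[ℂ] 𝕂) : Prop :=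
  ∀ x : lp (fun i => W i) 2, HasSum (fun i => (v i : ℂ) • (x i : 𝕂)) (T x)

/-- The range of `T ∘ P_S` where `P_S` is the orthogonal projection onto the
families supported on `S`, i.e. the image under `T` of the families supported on `S`. -/
def rng {W : ι → Submodule ℂ 𝕂} (T : lp (fun i => W i) 2 →L[ℂ] 𝕂)
    (S : Set ι) : Submodule ℂ 𝕂 :=
  (supp W S).map (T : lp (fun i => W i) 2 →ₗ[ℂ] 𝕂)

/-- `(W, v)` (with the partition `Ipos`, `Ineg` of the index set and synthesis
operator `T`) is a `J`-fusion frame for `𝕂`. -/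
structure IsJFusionFrame (J : 𝕂 →L[ℂ] 𝕂) (W : ι → Submodule ℂ 𝕂) (v : ι → ℝ)
    (Ipos Ineg : Set ι) (T : lp (fun i => W i) 2 →L[ℂ] 𝕂) : Prop where
  partition : ∀ i : ι, (i ∈ Ipos ∧ i ∉ Ineg) ∨ (i ∈ Ineg ∧ i ∉ Ipos)
  pos_nonneg : ∀ i ∈ Ipos, JNonneg J (W i)
  neg_neg : ∀ i ∈ Ineg, JNeg J (W i)
  weights : ∀ i, 0 < v i
  synth : IsSynth W v T
  max_pos : MaxUnifJPos J (rng T Ipos)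
  max_neg : MaxUnifJNeg J (rng T Ineg)

/-- `Bm ≤ Am < 0 < Ap ≤ Bp` are `J`-fusion frame bounds for `(W, v)`:
`A_± [f,f] ≤ Σ_{i ∈ I_±} v_i² |[π_{W_i} J f, f]| ≤ B_± [f,f]` for `f ∈ M_±`. -/
def JFusionBounds (J : 𝕂 →L[ℂ] 𝕂) (W : ι → Submodule ℂ 𝕂) (v : ι → ℝ)
    (Ipos Ineg : Set ι) (Bm Am Ap Bp : ℝ) : Prop :=
  Bm ≤ Am ∧ Am < 0 ∧ 0 < Ap ∧ Ap ≤ Bp ∧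
  (∀ f ∈ Mspace W Ipos,
    Summable (fun i : Ipos => v (i : ι) ^ 2 * ‖ip J (pr (W (i : ι)) (J f)) f‖) ∧
    Ap * (ip J f f).re ≤ ∑' i : Ipos, v (i : ι) ^ 2 * ‖ip J (pr (W (i : ι)) (J f)) f‖ ∧
    ∑' i : Ipos, v (i : ι) ^ 2 * ‖ip J (pr (W (i : ι)) (J f)) f‖ ≤ Bp * (ip J f f).re) ∧
  (∀ f ∈ Mspace W Ineg,
    Summable (fun i : Ineg => v (i : ι) ^ 2 * ‖ip J (pr (W (i : ι)) (J f)) f‖) ∧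
    Am * (ip J f f).re ≤ ∑' i : Ineg, v (i : ι) ^ 2 * ‖ip J (pr (W (i : ι)) (J f)) f‖ ∧
    ∑' i : Ineg, v (i : ι) ^ 2 * ‖ip J (pr (W (i : ι)) (J f)) f‖ ≤ Bm * (ip J f f).re)

/-- `(Bm, Am, Ap, Bp)` are the *optimal* `J`-fusion frame bounds. -/
def OptJFusionBounds (J : 𝕂 →L[ℂ] 𝕂) (W : ι → Submodule ℂ 𝕂) (v : ι → ℝ)
    (Ipos Ineg : Set ι) (Bm Am Ap Bp : ℝ) : Prop :=
  JFusionBounds J W v Ipos Ineg Bm Am Ap Bp ∧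
  ∀ Bm' Am' Ap' Bp' : ℝ, JFusionBounds J W v Ipos Ineg Bm' Am' Ap' Bp' →
    Bm' ≤ Bm ∧ Am ≤ Am' ∧ Ap' ≤ Ap ∧ Bp ≤ Bp'

/-- `{f i}` (with the partition `Ipos`, `Ineg` of the index set) is a `J`-frame for `𝕂`. -/
structure IsJFrame (J : 𝕂 →L[ℂ] 𝕂) (f : ι → 𝕂) (Ipos Ineg : Set ι) : Prop where
  partition : ∀ i : ι, (i ∈ Ipos ∧ i ∉ Ineg) ∨ (i ∈ Ineg ∧ i ∉ Ipos)
  nonneg : ∀ i ∈ Ipos, 0 ≤ (ip J (f i) (f i)).re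
  neg : ∀ i ∈ Ineg, (ip J (f i) (f i)).re < 0
  frame : ∃ C D : ℝ, 0 < C ∧ C ≤ D ∧ ∀ g : 𝕂,
    Summable (fun i => ‖@inner ℂ _ _ g (f i)‖ ^ 2) ∧
    C * ‖g‖ ^ 2 ≤ ∑' i, ‖@inner ℂ _ _ g (f i)‖ ^ 2 ∧
    ∑' i, ‖@inner ℂ _ _ g (f i)‖ ^ 2 ≤ D * ‖g‖ ^ 2
  max_pos : MaxUnifJPos J (Mspan f Ipos)
  max_neg : MaxUnifJNeg J (Mspan f Ineg)

/-- `Bm ≤ Am < 0 < Ap ≤ Bp` are `J`-frame bounds for `{f i}`: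
`A_± [g,g] ≤ Σ_{i ∈ I_±} |[g, f i]|² ≤ B_± [g,g]` for `g ∈ M_±`. -/
def JFrameBounds (J : 𝕂 →L[ℂ] 𝕂) (f : ι → 𝕂) (Ipos Ineg : Set ι)
    (Bm Am Ap Bp : ℝ) : Prop :=
  Bm ≤ Am ∧ Am < 0 ∧ 0 < Ap ∧ Ap ≤ Bp ∧
  (∀ g ∈ Mspan f Ipos,
    Summable (fun i : Ipos => ‖ip J g (f (i : ι))‖ ^ 2) ∧
    Ap * (ip J g g).re ≤ ∑' i : Ipos, ‖ip J g (f (i : ι))‖ ^ 2 ∧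
    ∑' i : Ipos, ‖ip J g (f (i : ι))‖ ^ 2 ≤ Bp * (ip J g g).re) ∧
  (∀ g ∈ Mspan f Ineg,
    Summable (fun i : Ineg => ‖ip J g (f (i : ι))‖ ^ 2) ∧
    Am * (ip J g g).re ≤ ∑' i : Ineg, ‖ip J g (f (i : ι))‖ ^ 2 ∧
    ∑' i : Ineg, ‖ip J g (f (i : ι))‖ ^ 2 ≤ Bm * (ip J g g).re)

/-- `(Bm, Am, Ap, Bp)` are the *optimal* `J`-frame bounds. -/
def OptJFrameBounds (J : 𝕂 →L[ℂ] 𝕂) (f : ι → 𝕂) (Ipos Ineg : Set ι)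
    (Bm Am Ap Bp : ℝ) : Prop :=
  JFrameBounds J f Ipos Ineg Bm Am Ap Bp ∧
  ∀ Bm' Am' Ap' Bp' : ℝ, JFrameBounds J f Ipos Ineg Bm' Am' Ap' Bp' →
    Bm' ≤ Bm ∧ Am ≤ Am' ∧ Ap' ≤ Ap ∧ Bp ≤ Bp'


/-!
Write `u = J f`. The adjoint of the synthesis operator `T₊` is `u ↦ (v_i π_{W_i} u)_{i ∈ I₊}`,
so `Σ_{i ∈ I₊} v_i² [π_{W_i} J f, f] = Σ_{i ∈ I₊} v_i² ‖π_{W_i} u‖² = ‖T₊* u‖² ≤ ‖T₊‖² ‖f‖²`,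
`J` being unitary. On the other hand `M₊` lies in the closure of the uniformly `J`-positive
range of `T₊`, so the Gramian `G` of `M₊` is a coercive selfadjoint operator; it is therefore
invertible, and Cauchy–Schwarz for its form gives `γ(G) ‖f‖² ≤ ⟨G f, f⟩ = [f, f]`.
-/

open RCLike ComplexConjugate

section Coercive

variable {𝕜 E : Type*} [RCLike 𝕜] [NormedAddCommGroup E] [InnerProductSpace 𝕜 E]
  {G : E →L[𝕜] E} {α : ℝ}

lemma mul_norm_le_norm_apply_of_coercive (hG : ∀ z, α * ‖z‖ ^ 2 ≤ re ⟪G z, z⟫_𝕜) (z : E) :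
    α * ‖z‖ ≤ ‖G z‖ := by
  rcases eq_or_ne z 0 with rfl | hz
  · simp
  have hz' : 0 < ‖z‖ := norm_pos_iff.mpr hz
  have : α * ‖z‖ * ‖z‖ ≤ ‖G z‖ * ‖z‖ := by
    calc α * ‖z‖ * ‖z‖ = α * ‖z‖ ^ 2 := by ring
      _ ≤ re ⟪G z, z⟫_𝕜 := hG z
      _ ≤ ‖G z‖ * ‖z‖ := re_inner_le_norm _ _
  exact le_of_mul_le_mul_right this hz'

lemma eq_zero_of_coercive (hα : 0 < α) (hG : ∀ z, α * ‖z‖ ^ 2 ≤ re ⟪G z, z⟫_𝕜) {z : E}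
    (hz : re ⟪G z, z⟫_𝕜 = 0) : z = 0 := by
  have := hG z
  rw [hz] at this
  exact norm_eq_zero.mp (pow_eq_zero_iff two_ne_zero |>.mp
    (le_antisymm (nonpos_of_mul_nonpos_right this hα) (sq_nonneg _)))

lemma surjective_of_coercive [CompleteSpace E] (hα : 0 < α)
    (hG : ∀ z, α * ‖z‖ ^ 2 ≤ re ⟪G z, z⟫_𝕜) : Function.Surjective G := by
  have hanti : AntilipschitzWith (α⁻¹).toNNReal G :=
    G.antilipschitz_of_bound fun z => by
      rw [Real.coe_toNNReal _ (inv_nonneg.mpr hα.le), ← div_eq_inv_mul,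
        le_div_iff₀' hα]
      exact mul_norm_le_norm_apply_of_coercive hG z
  have hclosed : IsClosed (G.range : Set E) := by
    rw [LinearMap.coe_range]
    exact hanti.isClosed_range G.uniformContinuous
  have hdense : G.rangeᗮ = ⊥ := by
    refine (Submodule.eq_bot_iff _).mpr fun y hy => eq_zero_of_coercive hα hG ?_
    rw [(Submodule.mem_orthogonal _ _).mp hy (G y) ⟨y, rfl⟩, map_zero]
  have htop := Submodule.topologicalClosure_eq_top_iff.mpr hdense
  rw [IsClosed.submodule_topologicalClosure_eq hclosed] at htop
  exact LinearMap.range_eq_top.mp htop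

lemma re_inner_sq_le_of_isSymmetric (hsymm : (G : E →ₗ[𝕜] E).IsSymmetric)
    (hnonneg : ∀ z, 0 ≤ re ⟪G z, z⟫_𝕜) (x y : E) :
    re ⟪G x, y⟫_𝕜 ^ 2 ≤ re ⟪G x, x⟫_𝕜 * re ⟪G y, y⟫_𝕜 := by
  have hyx : re ⟪G y, x⟫_𝕜 = re ⟪G x, y⟫_𝕜 := by
    rw [show ⟪G y, x⟫_𝕜 = ⟪y, G x⟫_𝕜 from hsymm y x, ← inner_conj_symm, conj_re]
  have hquad : ∀ t : ℝ,
      0 ≤ re ⟪G y, y⟫_𝕜 * (t * t) + (-2 * re ⟪G x, y⟫_𝕜) * t + re ⟪G x, x⟫_𝕜 := by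
    intro t
    have h := hnonneg (x - (t : 𝕜) • y)
    simp only [map_sub, map_smul, inner_sub_left, inner_sub_right, inner_smul_left,
      inner_smul_right, conj_ofReal, re_ofReal_mul, hyx] at h
    linarith
  have := discrim_le_zero hquad
  rw [discrim] at this
  nlinarith

end Coercive

section ReducedMinimumModulus

variable {E : Type*} [NormedAddCommGroup E] [InnerProductSpace ℂ E] {G : E →L[ℂ] E} {α : ℝ}

lemma injective_of_coercive (hα : 0 < α) (hG : ∀ z, α * ‖z‖ ^ 2 ≤ re ⟪G z, z⟫_ℂ) :
    Function.Injective G :=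
  (injective_iff_map_eq_zero G).mpr fun z hz =>
    eq_zero_of_coercive hα hG (by rw [hz, inner_zero_left, map_zero])

lemma rmm_nonneg (G : E →L[ℂ] E) : 0 ≤ rmm G :=
  Real.sInf_nonneg (by rintro _ ⟨x, _, rfl⟩; exact norm_nonneg _)

lemma rmm_mul_norm_le_of_injective (hG : Function.Injective G) (x : E) :
    rmm G * ‖x‖ ≤ ‖G x‖ := by
  rcases eq_or_ne x 0 with rfl | hx
  · simp
  have hker : LinearMap.ker (G : E →ₗ[ℂ] E) = ⊥ := LinearMap.ker_eq_bot.mpr hG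
  have hle : rmm G ≤ ‖G ((‖x‖⁻¹ : ℂ) • x)‖ :=
    csInf_le ⟨0, by rintro _ ⟨_, _, rfl⟩; exact norm_nonneg _⟩
      ⟨_, ⟨by simp [hker], norm_smul_inv_norm hx⟩, rfl⟩
  rw [map_smul, norm_smul, norm_inv, Complex.norm_real, norm_norm, inv_mul_eq_div,
    le_div_iff₀ (norm_pos_iff.mpr hx)] at hle
  exact hle

lemma le_rmm_of_injective [Nontrivial E] (hG : Function.Injective G)
    (h : ∀ x, α * ‖x‖ ≤ ‖G x‖) : α ≤ rmm G := by
  obtain ⟨x, hx⟩ := exists_ne (0 : E)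
  have hker : LinearMap.ker (G : E →ₗ[ℂ] E) = ⊥ := LinearMap.ker_eq_bot.mpr hG
  refine le_csInf ⟨_, ⟨_, ⟨by simp [hker], norm_smul_inv_norm (𝕜 := ℂ) hx⟩, rfl⟩⟩ ?_
  rintro _ ⟨z, ⟨_, hz⟩, rfl⟩
  simpa [hz] using h z

/-- For a coercive symmetric `G`, write `x = G y`; Cauchy–Schwarz for the form of `G` gives
`‖x‖⁴ ≤ re ⟪G x, x⟫ * re ⟪G y, y⟫ ≤ re ⟪G x, x⟫ * ‖x‖ * ‖y‖`, and `γ(G) ‖y‖ ≤ ‖x‖`. -/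
lemma rmm_mul_norm_sq_le_re_inner [CompleteSpace E] (hsymm : (G : E →ₗ[ℂ] E).IsSymmetric)
    (hα : 0 < α) (hG : ∀ z, α * ‖z‖ ^ 2 ≤ re ⟪G z, z⟫_ℂ) (x : E) :
    rmm G * ‖x‖ ^ 2 ≤ re ⟪G x, x⟫_ℂ := by
  rcases eq_or_ne x 0 with rfl | hx
  · simp
  obtain ⟨y, rfl⟩ := surjective_of_coercive hα hG x
  have hcs := re_inner_sq_le_of_isSymmetric hsymm
    (fun z => le_trans (by positivity) (hG z)) y (G y)
  rw [inner_self_eq_norm_sq (𝕜 := ℂ)] at hcs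
  have hyy : re ⟪G y, y⟫_ℂ ≤ ‖G y‖ * ‖y‖ := re_inner_le_norm _ _
  have hγy := rmm_mul_norm_le_of_injective (injective_of_coercive hα hG) y
  have hγ := rmm_nonneg G
  have hGy : 0 < ‖G y‖ := norm_pos_iff.mpr hx
  have hc : 0 ≤ re ⟪G (G y), G y⟫_ℂ := le_trans (by positivity) (hG (G y))
  have : rmm G * ‖G y‖ ^ 4 ≤ ‖G y‖ ^ 2 * re ⟪G (G y), G y⟫_ℂ := by
    calc rmm G * ‖G y‖ ^ 4 = rmm G * (‖G y‖ ^ 2) ^ 2 := by ring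
      _ ≤ rmm G * (re ⟪G y, y⟫_ℂ * re ⟪G (G y), G y⟫_ℂ) := by gcongr
      _ ≤ rmm G * (‖G y‖ * ‖y‖ * re ⟪G (G y), G y⟫_ℂ) := by gcongr
      _ = (rmm G * ‖y‖) * ‖G y‖ * re ⟪G (G y), G y⟫_ℂ := by ring
      _ ≤ ‖G y‖ * ‖G y‖ * re ⟪G (G y), G y⟫_ℂ := by gcongr
      _ = ‖G y‖ ^ 2 * re ⟪G (G y), G y⟫_ℂ := by ring
  nlinarith [pow_pos hGy 2]

end ReducedMinimumModulus

section Krein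

variable {E : Type*} [NormedAddCommGroup E] [InnerProductSpace ℂ E]
  {J : E →L[ℂ] E} {M N : Submodule ℂ E}

lemma UnifJPos.mono (h : UnifJPos J N) (hle : M ≤ N) : UnifJPos J M :=
  let ⟨α, hα, hN⟩ := h
  ⟨α, hα, fun f hf => hN f (hle hf)⟩

lemma UnifJPos.topologicalClosure (h : UnifJPos J M) : UnifJPos J M.topologicalClosure := by
  obtain ⟨α, hα, hM⟩ := h
  refine ⟨α, hα, fun f hf =>
    closure_minimal (t := {z | α * ‖z‖ ^ 2 ≤ (ip J z z).re}) hM ?_ hf⟩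
  apply isClosed_le
  · fun_prop
  · exact Complex.continuous_re.comp (J.continuous.inner continuous_id)

variable [CompleteSpace E]

lemma IsFundSym.mem_unitary (hJ : IsFundSym J) : J ∈ unitary (E →L[ℂ] E) := by
  rw [Unitary.mem_iff, hJ.1.star_eq]
  exact ⟨hJ.2, hJ.2⟩

lemma IsFundSym.norm_map (hJ : IsFundSym J) (x : E) : ‖J x‖ = ‖x‖ :=
  J.norm_map_of_mem_unitary hJ.mem_unitary x

lemma pr_eq_starProjection [CompleteSpace M] : pr M = M.starProjection := by
  rw [pr, dif_pos (completeSpace_coe_iff_isComplete.mp ‹_›).isClosed]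
  rfl

lemma re_ip_pr_apply [CompleteSpace M] (f : E) :
    (ip J (pr M (J f)) f).re = ‖pr M (J f)‖ ^ 2 := by
  rw [ip, pr_eq_starProjection, ← inner_conj_symm, Complex.conj_re]
  exact M.re_inner_starProjection_eq_normSq (J f)

lemma inner_gram [CompleteSpace M] (x y : M) : ⟪gram J M x, y⟫_ℂ = ⟪J x, y⟫_ℂ := by
  rw [gram, dif_pos (completeSpace_coe_iff_isComplete.mp ‹_›).isClosed]
  exact M.inner_orthogonalProjectionOnto_eq_of_mem_right y (J x)

lemma gram_isSymmetric [CompleteSpace M] (hJ : IsSelfAdjoint J) :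
    (gram J M : M →ₗ[ℂ] M).IsSymmetric := fun x y => by
  change ⟪gram J M x, y⟫_ℂ = ⟪x, gram J M y⟫_ℂ
  rw [inner_gram, ← inner_conj_symm x, inner_gram, inner_conj_symm]
  exact hJ.isSymmetric x y

lemma UnifJPos.norm_sq_le_one_div_rmm_gram_mul [CompleteSpace M] (hM : UnifJPos J M)
    (hJ : IsSelfAdjoint J) {f : E} (hf : f ∈ M) : ‖f‖ ^ 2 ≤ 1 / rmm (gram J M) * (ip J f f).re := by
  obtain ⟨α, hα, hMα⟩ := hM
  have hcoer : ∀ x : M, α * ‖x‖ ^ 2 ≤ re ⟪gram J M x, x⟫_ℂ := fun x => by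
    rw [inner_gram]
    exact hMα x x.2
  rcases eq_or_ne f 0 with rfl | hf0
  · simp [ip]
  have : Nontrivial M := ⟨⟨f, hf⟩, 0, by simpa using hf0⟩
  have hγ : 0 < rmm (gram J M) := hα.trans_le <| le_rmm_of_injective
    (injective_of_coercive hα hcoer) (mul_norm_le_norm_apply_of_coercive hcoer)
  have key := rmm_mul_norm_sq_le_re_inner (gram_isSymmetric hJ) hα hcoer ⟨f, hf⟩
  rw [inner_gram] at key
  rw [one_div, ← div_eq_inv_mul, le_div_iff₀' hγ]
  exact key

end Krein

section Synthesis

variable {E : Type*} [NormedAddCommGroup E] [InnerProductSpace ℂ E]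
  {W : ι → Submodule ℂ E} {S : lp (fun i => W i) 2 →L[ℂ] E}

lemma apply_single_of_hasSum {w : ι → ℂ}
    (hS : ∀ x : lp (fun i => W i) 2, HasSum (fun i => w i • (x i : E)) (S x))
    (i : ι) (a : W i) : S (lp.single 2 i a) = w i • (a : E) := by
  have hx : ∀ j ≠ i, w j • ((lp.single 2 i a : lp (fun i => W i) 2) j : E) = 0 :=
    fun j hj => by simp [Pi.single_eq_of_ne hj]
  rw [(hS _).unique (hasSum_single i hx), lp.single_apply_self]

lemma le_rng {v : ι → ℝ} (hS : IsSynth W v S) {s : Set ι} {i : ι} (hi : i ∈ s)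
    (hv : v i ≠ 0) : W i ≤ rng S s := by
  intro g hg
  refine ⟨lp.single 2 i ((v i : ℂ)⁻¹ • ⟨g, hg⟩), fun j hj => ?_, ?_⟩
  · exact lp.single_apply_ne (E := fun i => W i) 2 i _ (ne_of_mem_of_not_mem hi hj).symm
  · rw [ContinuousLinearMap.coe_coe, apply_single_of_hasSum hS, Submodule.coe_smul, smul_smul,
      mul_inv_cancel₀ (Complex.ofReal_ne_zero.mpr hv), one_smul]

lemma Mspace_le_topologicalClosure_rng {v : ι → ℝ} (hS : IsSynth W v S) {s : Set ι}
    (hv : ∀ i ∈ s, v i ≠ 0) : Mspace W s ≤ (rng S s).topologicalClosure :=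
  Submodule.topologicalClosure_mono (iSup₂_le fun i hi => le_rng hS hi (hv i hi))

lemma IsJFusionFrame.unifJPos_Mspace {J : E →L[ℂ] E} {v : ι → ℝ} {Ipos Ineg : Set ι}
    (hF : IsJFusionFrame J W v Ipos Ineg S) : UnifJPos J (Mspace W Ipos) :=
  hF.max_pos.1.topologicalClosure.mono
    (Mspace_le_topologicalClosure_rng hF.synth fun i _ => (hF.weights i).ne')

variable [CompleteSpace E] [∀ i, CompleteSpace (W i)]

lemma coe_adjoint_apply_of_hasSum {w : ι → ℂ}
    (hS : ∀ x : lp (fun i => W i) 2, HasSum (fun i => w i • (x i : E)) (S x))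
    (u : E) (i : ι) : ((S.adjoint u) i : E) = conj (w i) • pr (W i) u := by
  suffices (S.adjoint u) i = conj (w i) • (W i).orthogonalProjectionOnto u by
    rw [this, pr_eq_starProjection, Submodule.starProjection_apply]
    rfl
  refine ext_inner_right ℂ fun y => ?_
  rw [inner_smul_left, conj_conj, Submodule.inner_orthogonalProjectionOnto_eq_of_mem_right,
    ← lp.inner_single_right, ContinuousLinearMap.adjoint_inner_left,
    apply_single_of_hasSum hS, inner_smul_right]

lemma hasSum_norm_sq_adjoint_apply_of_hasSum {w : ι → ℂ}
    (hS : ∀ x : lp (fun i => W i) 2, HasSum (fun i => w i • (x i : E)) (S x)) (u : E) :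
    HasSum (fun i => ‖w i‖ ^ 2 * ‖pr (W i) u‖ ^ 2) (‖S.adjoint u‖ ^ 2) := by
  have h := lp.hasSum_norm (p := 2) (by norm_num) (S.adjoint u)
  simp only [ENNReal.toReal_ofNat, Real.rpow_two] at h
  convert h using 2 with i
  rw [← Submodule.norm_coe, coe_adjoint_apply_of_hasSum hS, norm_smul, RCLike.norm_conj, mul_pow]

lemma tsum_norm_sq_mul_norm_sq_pr_le {w : ι → ℂ}
    (hS : ∀ x : lp (fun i => W i) 2, HasSum (fun i => w i • (x i : E)) (S x)) (u : E) :
    ∑' i, ‖w i‖ ^ 2 * ‖pr (W i) u‖ ^ 2 ≤ ‖S‖ ^ 2 * ‖u‖ ^ 2 := by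
  rw [(hasSum_norm_sq_adjoint_apply_of_hasSum hS u).tsum_eq, ← mul_pow,
    ← LinearIsometryEquiv.norm_map ContinuousLinearMap.adjoint S]
  gcongr
  exact S.adjoint.le_opNorm u

lemma tsum_subtype_sq_mul_norm_sq_pr_le {s : Set ι} {v : ι → ℝ}
    (hS : ∀ x : lp (fun i => W i) 2,
      HasSum (fun i => (if i ∈ s then (v i : ℂ) else 0) • (x i : E)) (S x)) (u : E) :
    ∑' i : s, v i ^ 2 * ‖pr (W i) u‖ ^ 2 ≤ ‖S‖ ^ 2 * ‖u‖ ^ 2 := by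
  refine le_of_eq_of_le ?_ (tsum_norm_sq_mul_norm_sq_pr_le hS u)
  rw [← tsum_subtype_eq_of_support_subset (s := s)]
  · exact tsum_congr fun i => by simp [i.2]
  · intro i hi
    by_contra h
    simp [h] at hi

end Synthesis

/-- For a `J`-fusion frame with positive synthesis part `T₊` and
`M₊ = cl(Σ_{i∈I₊} W i)`, one has for every `f ∈ M₊`:
`Σ_{i∈I₊} v_i² [π_{W_i}(Jf), f] ≤ (1/γ(G_{M₊})) ‖T₊‖² [f,f]`. -/
theorem stmt8 {𝕂 : Type*} [NormedAddCommGroup 𝕂] [InnerProductSpace ℂ 𝕂] [CompleteSpace 𝕂]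
    {ι : Type*} (J : 𝕂 →L[ℂ] 𝕂) (hJ : IsFundSym J)
    (W : ι → Submodule ℂ 𝕂) (hWc : ∀ i, IsClosed ((W i : Set 𝕂)))
    (v : ι → ℝ) (Ipos Ineg : Set ι)
    (T : lp (fun i => W i) 2 →L[ℂ] 𝕂)
    (hF : IsJFusionFrame J W v Ipos Ineg T)
    -- the positive part `T₊ = T ∘ P₊` of the synthesis operator:
    (Tp : lp (fun i => W i) 2 →L[ℂ] 𝕂)
    (hTp : ∀ x, HasSum (fun i : ι => (if i ∈ Ipos then (v i : ℂ) else 0) • (x i : 𝕂)) (Tp x)) :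
    ∀ f ∈ Mspace W Ipos,
      ∑' i : Ipos, v (i : ι) ^ 2 * (ip J (pr (W (i : ι)) (J f)) f).re
        ≤ (1 / rmm (gram J (Mspace W Ipos))) * ‖Tp‖ ^ 2 * (ip J f f).re := by
  intro f hf
  have : ∀ i, CompleteSpace (W i) := fun i => (hWc i).completeSpace_coe
  have : CompleteSpace (Mspace W Ipos) :=
    (Submodule.isClosed_topologicalClosure _).completeSpace_coe
  calc ∑' i : Ipos, v i ^ 2 * (ip J (pr (W i) (J f)) f).re
      = ∑' i : Ipos, v i ^ 2 * ‖pr (W i) (J f)‖ ^ 2 := by simp only [re_ip_pr_apply]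
    _ ≤ ‖Tp‖ ^ 2 * ‖J f‖ ^ 2 := tsum_subtype_sq_mul_norm_sq_pr_le hTp (J f)
    _ ≤ ‖Tp‖ ^ 2 * (1 / rmm (gram J (Mspace W Ipos)) * (ip J f f).re) := by
      rw [hJ.norm_map]
      gcongr
      exact hF.unifJPos_Mspace.norm_sq_le_one_div_rmm_gram_mul hJ.1 hf
    _ = 1 / rmm (gram J (Mspace W Ipos)) * ‖Tp‖ ^ 2 * (ip J f f).re := by ring

end JFF
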